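/- Let K be an odd positive integer and let γ : {0,…,K} → [0,1] satisfy: γ(l) ≥ γ(l+1) for every integer 0 ≤ l ≤ (K−1)/2, γ(l) ≤ γ(l+1) for every integer (K+1)/2 ≤ l ≤ K−1, γ((K−1)/2) > 0, and γ((K+1)/2) > 0. Then the function G : [0,1] → ℝ defined by G(p) = Σ_{l=(K+1)/2}^{K} γ(l)·C(K,l) p^l (1−p)^{K−l} − Σ_{l=0}^{(K−1)/2} γ(l)·C(K,l) p^l (1−p)^{K−l} is strictly increasing on [0,1]; in particular its derivative is strictly positive on (0,1). -/

import Mathlib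

/-!
Write `K = 2t + 1` and `B n l = C(n, l) pˡ (1 - p)ⁿ⁻ˡ`. Then `G = ∑ₗ c l • B K l` with `c l = γ l`
above the median and `c l = -γ l` below it. The derivative of such a Bernstein combination is
`K • ∑ⱼ (c (j + 1) - c j) • B (K - 1) j`; the monotonicity of `γ` makes every difference
nonnegative, and the middle one is `γ t + γ (t + 1) > 0`. As the `B (K - 1) j` are positive on
`(0, 1)`, so is `G'`.
-/

open Finset

/-- The (rescaled) probability difference of DaRRM with noise function `γ`
outputting the majority side, when the `K` i.i.d. mechanisms succeed with
probability `p`. -/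
noncomputable def Gfun (K : ℕ) (γ : ℕ → ℝ) (p : ℝ) : ℝ :=
  (∑ l ∈ Finset.Icc ((K + 1) / 2) K,
      γ l * (K.choose l : ℝ) * p ^ l * (1 - p) ^ (K - l))
  - ∑ l ∈ Finset.range ((K + 1) / 2),
      γ l * (K.choose l : ℝ) * p ^ l * (1 - p) ^ (K - l)

open Polynomial

theorem derivative_sum_C_mul_bernsteinPolynomial {R : Type*} [CommRing R] (n : ℕ) (c : ℕ → R) :
    derivative (∑ l ∈ range (n + 2), C (c l) * bernsteinPolynomial R (n + 1) l) =
      (n + 1) * ∑ j ∈ range (n + 1), C (c (j + 1) - c j) * bernsteinPolynomial R n j := by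
  have shift : ∑ j ∈ range (n + 1), C (c (j + 1)) * bernsteinPolynomial R n (j + 1)
      + C (c 0) * bernsteinPolynomial R n 0
      = ∑ j ∈ range (n + 1), C (c j) * bernsteinPolynomial R n j := by
    rw [← sum_range_succ' (fun j => C (c j) * bernsteinPolynomial R n j), sum_range_succ,
      bernsteinPolynomial.eq_zero_of_lt R (Nat.lt_succ_self n), mul_zero, add_zero]
  have succ_terms :
      ∑ j ∈ range (n + 1), derivative (C (c (j + 1)) * bernsteinPolynomial R (n + 1) (j + 1))
      = (n + 1) * ∑ j ∈ range (n + 1), (C (c (j + 1)) * bernsteinPolynomial R n j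
          - C (c (j + 1)) * bernsteinPolynomial R n (j + 1)) := by
    rw [mul_sum]
    exact sum_congr rfl fun j _ => by
      rw [derivative_C_mul, bernsteinPolynomial.derivative_succ_aux]; ring
  rw [sum_range_succ', derivative_add, derivative_sum, succ_terms, derivative_C_mul,
    bernsteinPolynomial.derivative_zero, Nat.add_sub_cancel]
  simp only [C_sub, sub_mul, sum_sub_distrib]
  push_cast
  linear_combination (-(n + 1 : R[X])) * shift

theorem bernsteinPolynomial_eval_pos {R : Type*} [CommRing R] [PartialOrder R]
    [IsStrictOrderedRing R] {n ν : ℕ} (h : ν ≤ n) {x : R} (hx : x ∈ Set.Ioo 0 1) :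
    0 < (bernsteinPolynomial R n ν).eval x := by
  have hx' : 0 < 1 - x := sub_pos.mpr hx.2
  simp only [bernsteinPolynomial, eval_mul, eval_pow, eval_natCast, eval_X, eval_sub, eval_one]
  exact mul_pos (mul_pos (by exact_mod_cast Nat.choose_pos h) (pow_pos hx.1 _)) (pow_pos hx' _)

theorem derivative_sum_C_mul_bernsteinPolynomial_eval_pos {R : Type*} [CommRing R]
    [PartialOrder R] [IsStrictOrderedRing R] {n : ℕ} {c : ℕ → R}
    (hmono : ∀ j ≤ n, c j ≤ c (j + 1)) {k : ℕ} (hk : k ≤ n) (hstrict : c k < c (k + 1))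
    {x : R} (hx : x ∈ Set.Ioo 0 1) :
    0 < (derivative (∑ l ∈ range (n + 2), C (c l) * bernsteinPolynomial R (n + 1) l)).eval x := by
  rw [derivative_sum_C_mul_bernsteinPolynomial, eval_mul, eval_finsetSum]
  refine mul_pos (by simp only [eval_add, eval_natCast, eval_one]; positivity) ?_
  simp only [eval_C_mul]
  refine sum_pos' (fun j hj => ?_) ⟨k, mem_range.mpr (by omega), ?_⟩
  · have hj : j ≤ n := Nat.lt_succ_iff.mp (mem_range.mp hj)
    exact mul_nonneg (sub_nonneg.mpr (hmono j hj)) (bernsteinPolynomial_eval_pos hj hx).le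
  · exact mul_pos (sub_pos.mpr hstrict) (bernsteinPolynomial_eval_pos hk hx)

def signedCoeff (K : ℕ) (γ : ℕ → ℝ) (l : ℕ) : ℝ :=
  if (K + 1) / 2 ≤ l then γ l else -γ l

theorem Gfun_eq_eval_sum_bernsteinPolynomial (K : ℕ) (γ : ℕ → ℝ) :
    Gfun K γ = fun p =>
      (∑ l ∈ range (K + 1), C (signedCoeff K γ l) * bernsteinPolynomial ℝ K l).eval p := by
  funext p
  simp only [eval_finsetSum, eval_C, bernsteinPolynomial, eval_mul, eval_pow, eval_natCast,
    eval_X, eval_sub, eval_one]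
  rw [← sum_range_add_sum_Ico _ (by omega : (K + 1) / 2 ≤ K + 1), Gfun,
    ← Ico_add_one_right_eq_Icc, sub_eq_neg_add, ← sum_neg_distrib]
  congr 1 <;> refine sum_congr rfl fun l hl => ?_
  · rw [signedCoeff, if_neg (by simpa using hl)]; ring
  · rw [signedCoeff, if_pos (mem_Ico.mp hl).1]; ring

section

variable {t : ℕ} {γ : ℕ → ℝ}

theorem signedCoeff_middle_lt (hsum : 0 < γ t + γ (t + 1)) :
    signedCoeff (2 * t + 1) γ t < signedCoeff (2 * t + 1) γ (t + 1) := by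
  simp only [signedCoeff, show (2 * t + 1 + 1) / 2 = t + 1 by omega, if_pos le_rfl,
    if_neg (Nat.not_succ_le_self t)]
  linarith

theorem signedCoeff_le_succ (hlow : ∀ l < t, γ (l + 1) ≤ γ l)
    (hhigh : ∀ l, t < l → l < 2 * t + 1 → γ l ≤ γ (l + 1)) (hmid : 0 ≤ γ t + γ (t + 1))
    {j : ℕ} (hj : j ≤ 2 * t) :
    signedCoeff (2 * t + 1) γ j ≤ signedCoeff (2 * t + 1) γ (j + 1) := by
  simp only [signedCoeff, show (2 * t + 1 + 1) / 2 = t + 1 by omega]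
  rcases lt_trichotomy j t with hjt | rfl | hjt
  · rw [if_neg (by omega), if_neg (by omega)]; linarith [hlow j hjt]
  · rw [if_neg (by omega), if_pos le_rfl]; linarith
  · rw [if_pos (by omega), if_pos (by omega)]; exact hhigh j hjt (by omega)

end

theorem statement9 (K : ℕ) (hK : Odd K)
    (γ : ℕ → ℝ)
    (hmono1 : ∀ l ≤ (K - 1) / 2, γ (l + 1) ≤ γ l)
    (hmono2 : ∀ l, (K + 1) / 2 ≤ l → l ≤ K - 1 → γ l ≤ γ (l + 1))
    (hpos1 : 0 < γ ((K - 1) / 2)) (hpos2 : 0 < γ ((K + 1) / 2)) :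
    StrictMonoOn (Gfun K γ) (Set.Icc 0 1) ∧
    ∀ p ∈ Set.Ioo (0 : ℝ) 1, 0 < deriv (Gfun K γ) p := by
  obtain ⟨t, rfl⟩ := hK
  rw [show (2 * t + 1 - 1) / 2 = t by omega] at hmono1 hpos1
  rw [show (2 * t + 1 + 1) / 2 = t + 1 by omega] at hmono2 hpos2
  have hmid : 0 < γ t + γ (t + 1) := add_pos hpos1 hpos2
  have hderiv : ∀ p ∈ Set.Ioo (0 : ℝ) 1, 0 < deriv (Gfun (2 * t + 1) γ) p := fun p hp => by
    rw [Gfun_eq_eval_sum_bernsteinPolynomial, Polynomial.deriv]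
    exact derivative_sum_C_mul_bernsteinPolynomial_eval_pos (n := 2 * t)
      (c := signedCoeff (2 * t + 1) γ)
      (fun j hj => signedCoeff_le_succ (fun l hl => hmono1 l hl.le)
        (fun l hl hl' => hmono2 l hl (by omega)) hmid.le hj)
      (by omega) (signedCoeff_middle_lt hmid) hp
  refine ⟨strictMonoOn_of_deriv_pos (convex_Icc 0 1) ?_ (by rwa [interior_Icc]), hderiv⟩
  rw [Gfun_eq_eval_sum_bernsteinPolynomial]
  exact Polynomial.continuousOn _
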